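/- arXiv:math/9606232 — 2 statements merged into one kernel-verified Lean document; each statement's English description precedes it below -/
import Mathlib

section
/- If F is an irredundant family and G generates F (i.e., every member of F is a nonempty union of members of G), then |F| ≤ |G|. -/
/-! Pick, for each member of `F` in its irredundant order, a generator containing that member's
new point and contained in the member. If two members picked the same generator, the new point
of the later one would lie in the earlier one, so the choice is injective. -/

open scoped Classical

variable {α : Type*}

/-- A finite family of sets is irredundant if its members can be arranged in a
sequence such that each set contains a point not in any of the preceding sets. -/
def Irredundant (F : Finset (Set α)) : Prop :=
  ∃ l : List (Set α), l.Nodup ∧ l.toFinset = F ∧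
    ∀ i : Fin l.length, ∃ x ∈ l.get i, ∀ j : Fin l.length, j < i → x ∉ l.get j

/-- `G` generates `F` if every member of `F` is a nonempty union of members of `G`. -/
def Generates (G F : Finset (Set α)) : Prop :=
  ∀ f ∈ F, ∃ H : Finset (Set α), H ⊆ G ∧ H.Nonempty ∧ f = ⋃₀ ↑H

theorem Generates.exists_mem_subset {G F : Finset (Set α)} (hG : Generates G F) {f : Set α}
    (hf : f ∈ F) {x : α} (hx : x ∈ f) : ∃ g ∈ G, x ∈ g ∧ g ⊆ f := by
  obtain ⟨H, hHG, -, rfl⟩ := hG f hf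
  obtain ⟨g, hgH, hxg⟩ := Set.mem_sUnion.1 hx
  exact ⟨g, hHG hgH, hxg, Set.subset_sUnion_of_mem hgH⟩

theorem injective_of_mem_of_subset {ι : Type*} [LinearOrder ι] {s g : ι → Set α} {x : ι → α}
    (hx : ∀ i, x i ∈ g i) (hg : ∀ i, g i ⊆ s i) (hnew : ∀ i j, j < i → x i ∉ s j) :
    Function.Injective g := by
  have not_lt_of_eq : ∀ i j, g i = g j → ¬ i < j := fun i j h hij =>
    hnew j i hij (hg i (h ▸ hx j))
  exact fun i j h => le_antisymm (not_lt.1 (not_lt_of_eq j i h.symm)) (not_lt.1 (not_lt_of_eq i j h))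

/-- If `F` is irredundant and `G` generates `F`, then `|F| ≤ |G|`. -/
theorem card_le_of_generates (F G : Finset (Set α)) (hF : Irredundant F)
    (hG : Generates G F) : F.card ≤ G.card := by
  obtain ⟨l, hnd, rfl, hwit⟩ := hF
  choose x hx hnew using hwit
  have hcover : ∀ i, ∃ g ∈ G, x i ∈ g ∧ g ⊆ l.get i := fun i =>
    hG.exists_mem_subset (List.mem_toFinset.2 (l.get_mem i)) (hx i)
  choose g hgG hxg hgl using hcover
  have hinj : Function.Injective g := injective_of_mem_of_subset hxg hgl hnew
  calc l.toFinset.card = (Finset.univ : Finset (Fin l.length)).card := by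
        rw [List.toFinset_card_of_nodup hnd, Finset.card_univ, Fintype.card_fin]
    _ ≤ G.card := Finset.card_le_card_of_injOn g (fun i _ => hgG i) hinj.injOn
end

section
/- Every minimal redundant finite family F₀ of sets satisfies: for every f ∈ F₀, f ⊆ ⋃(F₀ \ {f}); consequently every point of ⋃F₀ belongs to at least two members of F₀. -/
open scoped Classical

variable {α : Type*}

/-! If a point of `f ∈ F₀` lay in no other member of `F₀`, then appending `f` to an irredundant
ordering of `F₀ \ {f}` would order `F₀` irredundantly. Hence each `f` is covered by the others,
and any point of `f` lies in a second member. -/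

def HasNewPoints (l : List (Set α)) : Prop :=
  ∀ i : Fin l.length, ∃ x ∈ l.get i, ∀ j : Fin l.length, j < i → x ∉ l.get j

theorem HasNewPoints.append_singleton {l : List (Set α)} {f : Set α} {x : α}
    (hl : HasNewPoints l) (hxf : x ∈ f) (hxl : ∀ g ∈ l, x ∉ g) :
    HasNewPoints (l ++ [f]) := by
  have get_left : ∀ j : Fin (l ++ [f]).length, ∀ hj : (j : ℕ) < l.length,
      (l ++ [f]).get j = l.get ⟨j, hj⟩ := fun j hj => by
    simp [List.getElem_append_left hj]
  intro i
  by_cases hi : (i : ℕ) < l.length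
  · obtain ⟨y, hy, hy_new⟩ := hl ⟨i, hi⟩
    refine ⟨y, by rwa [get_left i hi], fun j hj => ?_⟩
    have hjl : (j : ℕ) < l.length := (show (j : ℕ) < i from hj).trans hi
    rw [get_left j hjl]
    exact hy_new ⟨j, hjl⟩ hj
  · have hil : (i : ℕ) = l.length := by
      have := i.isLt
      simp only [List.length_append, List.length_singleton] at this
      omega
    have hif : (l ++ [f]).get i = f := by
      simp [hil]
    refine ⟨x, by rwa [hif], fun j hj => ?_⟩
    have hjl : (j : ℕ) < l.length := hil ▸ hj
    rw [get_left j hjl]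
    exact hxl _ (List.get_mem _ _)

theorem Irredundant.insert {F : Finset (Set α)} {f : Set α} {x : α} (hF : Irredundant F)
    (hxf : x ∈ f) (hxF : ∀ g ∈ F, x ∉ g) : Irredundant (insert f F) := by
  obtain ⟨l, hnd, rfl, hl⟩ := hF
  have hfl : f ∉ l := fun hf => hxF f (List.mem_toFinset.mpr hf) hxf
  refine ⟨l ++ [f], ?_, ?_, ?_⟩
  · exact hnd.append (List.nodup_singleton f) (by simpa using hfl)
  · ext g
    simp
  · exact HasNewPoints.append_singleton hl hxf fun g hg => hxF g (List.mem_toFinset.mpr hg)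

theorem subset_sUnion_erase_of_minimal_redundant {F₀ : Finset (Set α)}
    (hred : ¬ Irredundant F₀) (hmin : ∀ F ⊂ F₀, Irredundant F) {f : Set α} (hf : f ∈ F₀) :
    f ⊆ ⋃₀ ↑(F₀.erase f) := by
  intro x hxf
  by_contra hx
  apply hred
  rw [← Finset.insert_erase hf]
  exact (hmin _ (Finset.erase_ssubset hf)).insert hxf fun g hg hxg => hx ⟨g, hg, hxg⟩

theorem two_le_card_filter_mem_of_subset_sUnion_erase {F₀ : Finset (Set α)}
    (hcov : ∀ f ∈ F₀, f ⊆ ⋃₀ ↑(F₀.erase f)) {x : α} (hx : x ∈ ⋃₀ (↑F₀ : Set (Set α))) :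
    2 ≤ (F₀.filter (fun f => x ∈ f)).card := by
  obtain ⟨f, hf, hxf⟩ := hx
  obtain ⟨g, hg, hxg⟩ := hcov f hf hxf
  rw [Finset.mem_coe, Finset.mem_erase] at hg
  exact Finset.one_lt_card.mpr ⟨f, Finset.mem_filter.mpr ⟨hf, hxf⟩,
    g, Finset.mem_filter.mpr ⟨hg.2, hxg⟩, hg.1.symm⟩

/-- Every minimal redundant finite family `F₀` satisfies `f ⊆ ⋃ (F₀ \ {f})` for all
`f ∈ F₀`; consequently every point of `⋃ F₀` belongs to at least two members of `F₀`. -/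
theorem minimal_redundant_doubly_covers (F₀ : Finset (Set α))
    (hred : ¬ Irredundant F₀) (hmin : ∀ F ⊂ F₀, Irredundant F) :
    (∀ f ∈ F₀, f ⊆ ⋃₀ ↑(F₀.erase f)) ∧
      ∀ x ∈ ⋃₀ (↑F₀ : Set (Set α)), 2 ≤ (F₀.filter (fun f => x ∈ f)).card := by
  have hcov : ∀ f ∈ F₀, f ⊆ ⋃₀ ↑(F₀.erase f) := fun _ =>
    subset_sUnion_erase_of_minimal_redundant hred hmin
  exact ⟨hcov, fun x hx => two_le_card_filter_mem_of_subset_sUnion_erase hcov hx⟩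
end
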